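/- (Base norm contraction.) Let C ⊆ V and C' ⊆ V' be proper cones with bases B = C ∩ {v | ⟨e,v⟩ = 1} and B' = C' ∩ {v' | ⟨e',v'⟩ = 1}, and let T : V → V' be a linear base-preserving map (T(B) ⊆ B'). If v ∈ V satisfies ⟨e,v⟩ ≥ 0 and T(v) ∉ C', then ‖T v‖_{B'} ≤ ‖v‖_B · tanh(Δ(T)/2), where tanh(∞/2) := 1. -/

import Mathlib

noncomputable section

variable {V : Type*} [NormedAddCommGroup V] [InnerProductSpace ℝ V]

/-- A proper cone: closed, convex, closed under nonnegative scaling, pointed and solid. -/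
def IsProperCone (C : Set V) : Prop :=
  IsClosed C ∧ Convex ℝ C ∧ (∀ (r : ℝ), 0 ≤ r → ∀ x ∈ C, r • x ∈ C) ∧
    (C ∩ (-C) = {0}) ∧ (Submodule.span ℝ C = ⊤)

/-- `sup_C(a/b) := inf {λ : ℝ | λ • b - a ∈ C}`, as an extended real (`⊤` if no such `λ`). -/
def supRatio (C : Set V) (a b : V) : EReal :=
  sInf ((fun l : ℝ => (l : EReal)) '' {l : ℝ | l • b - a ∈ C})

/-- `inf_C(a/b) := sup {λ : ℝ | a - λ • b ∈ C}`. -/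
def infRatio (C : Set V) (a b : V) : EReal :=
  sSup ((fun l : ℝ => (l : EReal)) '' {l : ℝ | a - l • b ∈ C})

/-- Hilbert's projective metric `h_C(a,b) = ln (sup_C(a/b) * sup_C(b/a)) ∈ [0,∞]`. -/
def hilbertDist (C : Set V) (a b : V) : EReal :=
  if supRatio C a b = ⊤ ∨ supRatio C b a = ⊤ then ⊤
  else ((Real.log ((supRatio C a b).toReal * (supRatio C b a).toReal) : ℝ) : EReal)

/-- The oscillation `osc_C(a/b) = sup_C(a/b) - inf_C(a/b)`. -/
def oscRatio (C : Set V) (a b : V) : EReal :=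
  supRatio C a b - infRatio C a b

variable {V' : Type*} [NormedAddCommGroup V'] [InnerProductSpace ℝ V']

/-- The projective diameter `Δ(T)` of a cone-preserving linear map `T`. -/
def projDiam (C : Set V) (C' : Set V') (T : V →ₗ[ℝ] V') : EReal :=
  ⨆ (a : V) (_ : a ∈ C \ {0}) (b : V) (_ : b ∈ C \ {0}), hilbertDist C' (T a) (T b)

/-- `tanh(x/4)`, with the convention `tanh(⊤/4) = 1`. -/
def tanhQuarter (x : EReal) : ℝ :=
  if x = ⊤ then 1 else Real.tanh (x.toReal / 4)

/-- `tanh(x/2)`, with the convention `tanh(⊤/2) = 1`. -/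
def tanhHalf (x : EReal) : ℝ :=
  if x = ⊤ then 1 else Real.tanh (x.toReal / 2)

/-- The dual cone of `C` (identifying `V` with its dual via the inner product). -/
def dualConeSet (C : Set V) : Set V := {w : V | ∀ c ∈ C, 0 ≤ (inner ℝ w c : ℝ)}

/-- The base norm `‖v‖_B` induced by the cone `C` and the functional `⟨e, ·⟩`. -/
def baseNorm (C : Set V) (e : V) (v : V) : ℝ :=
  sInf {r : ℝ | ∃ cp ∈ C, ∃ cm ∈ C, v = cp - cm ∧ r = (inner ℝ e cp : ℝ) + (inner ℝ e cm : ℝ)}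

/-- The negativity `N_B(v)` induced by the cone `C` and the functional `⟨e, ·⟩`. -/
def negativity (C : Set V) (e : V) (v : V) : ℝ :=
  sInf {r : ℝ | ∃ cp ∈ C, ∃ cm ∈ C, v = cp - cm ∧ r = (inner ℝ e cm : ℝ)}

/-! Write `v = c₊ - c₋` with `c₊, c₋ ∈ C` and put `x = T c₊`, `y = T c₋`; base preservation gives
`⟨e', x⟩ = ⟨e, c₊⟩` and `⟨e', y⟩ = ⟨e, c₋⟩`. If `α • y - x` and `γ • x - y` lie in `C'`, then
`T v = x - y ∉ C'` forces `γ > 1`, and `⟨e, v⟩ ≥ 0` forces `α ≥ 1`, so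
`(αγ - 1) • (x - y) = (α - 1) • (γ • x - y) - (γ - 1) • (α • y - x)`
splits `T v` into two elements of `C'` whose total `⟨e', ·⟩`-mass is at most
`(⟨e', x⟩ + ⟨e', y⟩) (αγ - 1) / (αγ + 1)`. For the optimal `α, γ` this factor is
`tanh (h_{C'}(x, y) / 2) ≤ tanh (Δ(T) / 2)`, and taking the infimum over the decompositions of `v`
gives the bound. -/

open Set
open scoped RealInnerProductSpace Topology

namespace Real

theorem tanh_le_tanh {a b : ℝ} (hab : a ≤ b) : tanh a ≤ tanh b := by
  rwa [← artanh_le_artanh_iff ⟨neg_one_lt_tanh a, tanh_lt_one a⟩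
    ⟨neg_one_lt_tanh b, tanh_lt_one b⟩, artanh_tanh, artanh_tanh]

theorem tanh_log_div_two {s : ℝ} (hs : 0 < s) : tanh (log s / 2) = (s - 1) / (s + 1) := by
  have hus : exp (log s / 2) ^ 2 = s := by
    rw [← exp_nat_mul, Nat.cast_ofNat, mul_div_cancel₀ _ two_ne_zero, exp_log hs]
  have hu : exp (log s / 2) ≠ 0 := (exp_pos _).ne'
  rw [tanh_eq, exp_neg]
  generalize exp (log s / 2) = u at hus hu ⊢
  subst hus
  field_simp

end Real

theorem tanhHalf_top : tanhHalf ⊤ = 1 := if_pos rfl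

theorem tanhHalf_coe (x : ℝ) : tanhHalf x = Real.tanh (x / 2) := by
  simp [tanhHalf]

theorem tanhHalf_le_tanhHalf {a b : EReal} (ha : a ≠ ⊥) (hab : a ≤ b) :
    tanhHalf a ≤ tanhHalf b := by
  induction b using EReal.rec with
  | bot => exact absurd (le_bot_iff.mp hab) ha
  | top =>
    induction a using EReal.rec with
    | bot => exact absurd rfl ha
    | coe a => rw [tanhHalf_top, tanhHalf_coe]; exact (Real.tanh_lt_one _).le
    | top => exact le_rfl
  | coe b =>
    induction a using EReal.rec with
    | bot => exact absurd rfl ha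
    | coe a =>
      rw [tanhHalf_coe, tanhHalf_coe]
      exact Real.tanh_le_tanh (by linarith [EReal.coe_le_coe_iff.mp hab])
    | top => exact absurd hab (by simp)

theorem le_csInf_mul_of_forall_le_mul {S : Set ℝ} {f t : ℝ} (hne : S.Nonempty) (hbdd : BddBelow S)
    (h : ∀ r ∈ S, f ≤ r * t) : f ≤ sInf S * t := by
  rcases le_or_gt t 0 with ht | ht
  · obtain ⟨r, hr⟩ := hne
    exact (h r hr).trans (mul_le_mul_of_nonpos_right (csInf_le hbdd hr) ht)
  · rw [← div_le_iff₀ ht]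
    exact le_csInf hne fun r hr => (div_le_iff₀ ht).2 (h r hr)

namespace IsProperCone

variable {C : Set V}

theorem smul_mem (hC : IsProperCone C) {r : ℝ} (hr : 0 ≤ r) {x : V} (hx : x ∈ C) : r • x ∈ C :=
  hC.2.2.1 r hr x hx

theorem zero_mem (hC : IsProperCone C) : (0 : V) ∈ C := by
  have h : (0 : V) ∈ C ∩ -C := hC.2.2.2.1 ▸ rfl
  exact h.1

theorem add_mem (hC : IsProperCone C) {x y : V} (hx : x ∈ C) (hy : y ∈ C) : x + y ∈ C := by
  have hmid := hC.2.1 hx hy (by norm_num : (0 : ℝ) ≤ 1 / 2) (by norm_num : (0 : ℝ) ≤ 1 / 2)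
    (by norm_num)
  convert hC.smul_mem zero_le_two hmid using 1
  module

def toConvexCone (hC : IsProperCone C) : ConvexCone ℝ V where
  carrier := C
  smul_mem' _ hr _ hx := hC.smul_mem hr.le hx
  add_mem' _ hx _ hy := hC.add_mem hx hy

theorem exists_sub_eq (hC : IsProperCone C) (v : V) : ∃ a ∈ C, ∃ b ∈ C, a - b = v := by
  rcases subsingleton_or_nontrivial V with _ | _
  · exact ⟨0, hC.zero_mem, 0, hC.zero_mem, Subsingleton.elim _ _⟩
  · have hrep := ConvexCone.IsReproducing.of_span_eq_top (C := hC.toConvexCone) hC.2.2.2.2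
    exact Set.mem_sub.mp (Set.eq_univ_iff_forall.mp hrep v)

end IsProperCone

section

variable {C : Set V} {e : V}

theorem inner_pos_of_mem_interior_dualConeSet (he : e ∈ interior (dualConeSet C)) {c : V}
    (hc : c ∈ C) (hc0 : c ≠ 0) : 0 < ⟪e, c⟫ := by
  have hnear : ∀ᶠ t in 𝓝[>] (0 : ℝ), e - t • c ∈ dualConeSet C := by
    have hcont : Filter.Tendsto (fun t : ℝ => e - t • c) (𝓝 0) (𝓝 e) :=
      (by fun_prop : Continuous fun t : ℝ => e - t • c).tendsto' 0 e (by simp)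
    exact nhdsWithin_le_nhds (hcont.eventually (mem_interior_iff_mem_nhds.mp he))
  obtain ⟨t, ht, ht0⟩ := (hnear.and self_mem_nhdsWithin).exists
  have h := ht c hc
  rw [inner_sub_left, real_inner_smul_left, real_inner_self_eq_norm_sq] at h
  nlinarith [mul_pos (mem_Ioi.mp ht0) (pow_pos (norm_pos_iff.mpr hc0) 2)]

theorem bddBelow_baseNorm_set (he : e ∈ dualConeSet C) (v : V) :
    BddBelow {r : ℝ | ∃ cp ∈ C, ∃ cm ∈ C, v = cp - cm ∧ r = ⟪e, cp⟫ + ⟪e, cm⟫} :=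
  ⟨0, by rintro _ ⟨cp, hcp, cm, hcm, -, rfl⟩; exact add_nonneg (he cp hcp) (he cm hcm)⟩

theorem baseNorm_sub_le (he : e ∈ dualConeSet C) {a b : V} (ha : a ∈ C) (hb : b ∈ C) :
    baseNorm C e (a - b) ≤ ⟪e, a⟫ + ⟪e, b⟫ :=
  csInf_le (bddBelow_baseNorm_set he _) ⟨a, ha, b, hb, rfl, rfl⟩

theorem le_baseNorm_mul_of_forall_sub_eq (hC : IsProperCone C) (he : e ∈ dualConeSet C)
    {v : V} {f t : ℝ}
    (h : ∀ a ∈ C, ∀ b ∈ C, v = a - b → f ≤ (⟪e, a⟫ + ⟪e, b⟫) * t) :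
    f ≤ baseNorm C e v * t := by
  obtain ⟨a, ha, b, hb, hab⟩ := hC.exists_sub_eq v
  refine le_csInf_mul_of_forall_le_mul ⟨_, a, ha, b, hb, hab.symm, rfl⟩
    (bddBelow_baseNorm_set he v) ?_
  rintro _ ⟨a, ha, b, hb, hv, rfl⟩
  exact h a ha b hb hv

theorem exists_smul_sub_mem_of_supRatio_ne_top (hC : IsClosed C) (he : e ∈ dualConeSet C)
    {a b : V} (hb : 0 < ⟪e, b⟫) (h : supRatio C a b ≠ ⊤) :
    ∃ α : ℝ, α • b - a ∈ C ∧ supRatio C a b = α := by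
  set S := {l : ℝ | l • b - a ∈ C}
  have hne : S.Nonempty := by
    by_contra hS
    apply h
    change sInf ((fun l : ℝ => (l : EReal)) '' S) = ⊤
    rw [Set.not_nonempty_iff_eq_empty.mp hS, Set.image_empty, sInf_empty]
  have hbdd : BddBelow S := by
    refine ⟨⟪e, a⟫ / ⟪e, b⟫, fun l hl => ?_⟩
    have h0 := he _ hl
    rw [inner_sub_right, real_inner_smul_right] at h0
    rw [div_le_iff₀ hb]
    linarith
  have hS : IsClosed S := hC.preimage (by fun_prop)
  have hleast : IsLeast S (sInf S) := ⟨hS.csInf_mem hne hbdd, fun l hl => csInf_le hbdd hl⟩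
  exact ⟨sInf S, hleast.1, (EReal.coe_strictMono.monotone.map_isLeast hleast).csInf_eq⟩

theorem hilbertDist_ne_bot (x y : V) : hilbertDist C x y ≠ ⊥ := by
  unfold hilbertDist
  split_ifs <;> simp

theorem exists_hilbertDist_eq_log (hC : IsClosed C) (he : e ∈ dualConeSet C) {x y : V}
    (hx : 0 < ⟪e, x⟫) (hy : 0 < ⟪e, y⟫) (h : hilbertDist C x y ≠ ⊤) :
    ∃ α γ : ℝ, α • y - x ∈ C ∧ γ • x - y ∈ C ∧ hilbertDist C x y = (Real.log (α * γ) : ℝ) := by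
  have hfin : ¬(supRatio C x y = ⊤ ∨ supRatio C y x = ⊤) := fun htop => h (if_pos htop)
  obtain ⟨α, hα, hαeq⟩ := exists_smul_sub_mem_of_supRatio_ne_top hC he hy (not_or.mp hfin).1
  obtain ⟨γ, hγ, hγeq⟩ := exists_smul_sub_mem_of_supRatio_ne_top hC he hx (not_or.mp hfin).2
  refine ⟨α, γ, hα, hγ, ?_⟩
  rw [hilbertDist, if_neg hfin, hαeq, hγeq, EReal.toReal_coe, EReal.toReal_coe]

theorem one_lt_of_smul_sub_mem (hC : IsProperCone C) {x y : V} {γ : ℝ} (hx : x ∈ C)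
    (hxy : x - y ∉ C) (hγ : γ • x - y ∈ C) : 1 < γ := by
  by_contra! hγ1
  apply hxy
  convert hC.add_mem hγ (hC.smul_mem (sub_nonneg.mpr hγ1) hx) using 1
  module

theorem one_le_of_smul_sub_mem (he : e ∈ dualConeSet C) {x y : V} {α : ℝ} (hy : 0 < ⟪e, y⟫)
    (hxy : ⟪e, y⟫ ≤ ⟪e, x⟫) (hα : α • y - x ∈ C) : 1 ≤ α := by
  have h := he _ hα
  rw [inner_sub_right, real_inner_smul_right] at h
  nlinarith

theorem baseNorm_sub_le_of_smul_sub_mem (hC : IsProperCone C) (he : e ∈ dualConeSet C)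
    {x y : V} {α γ : ℝ} (hx : x ∈ C) (hxy : x - y ∉ C) (hy : 0 < ⟪e, y⟫)
    (hexy : ⟪e, y⟫ ≤ ⟪e, x⟫) (hα : α • y - x ∈ C) (hγ : γ • x - y ∈ C) :
    baseNorm C e (x - y) ≤ (⟪e, x⟫ + ⟪e, y⟫) * ((α * γ - 1) / (α * γ + 1)) := by
  have hγ1 := one_lt_of_smul_sub_mem hC hx hxy hγ
  have hα1 := one_le_of_smul_sub_mem he hy hexy hα
  have hs : 0 < α * γ - 1 := by nlinarith
  have hαy := he _ hα
  have hγx := he _ hγ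
  rw [inner_sub_right, real_inner_smul_right] at hαy hγx
  set μ := (α - 1) / (α * γ - 1)
  set ν := (γ - 1) / (α * γ - 1)
  have hdec : x - y = μ • (γ • x - y) - ν • (α • y - x) := by
    simp only [μ, ν]
    match_scalars <;> field_simp <;> ring
  calc baseNorm C e (x - y)
      ≤ ⟪e, μ • (γ • x - y)⟫ + ⟪e, ν • (α • y - x)⟫ := by
        rw [hdec]
        exact baseNorm_sub_le he (hC.smul_mem (div_nonneg (sub_nonneg.mpr hα1) hs.le) hγ)
          (hC.smul_mem (div_nonneg (sub_nonneg.mpr hγ1.le) hs.le) hα)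
    _ = ((α - 1) * (γ * ⟪e, x⟫ - ⟪e, y⟫) + (γ - 1) * (α * ⟪e, y⟫ - ⟪e, x⟫)) / (α * γ - 1) := by
        simp only [μ, ν, inner_sub_right, real_inner_smul_right]
        ring
    _ ≤ (⟪e, x⟫ + ⟪e, y⟫) * ((α * γ - 1) / (α * γ + 1)) := by
        rw [div_le_iff₀ hs, mul_div_assoc', div_mul_eq_mul_div, le_div_iff₀ (by positivity)]
        have hα0 : 0 ≤ α := by linarith
        have hγ0 : 0 ≤ γ := by linarith
        nlinarith [mul_nonneg (mul_nonneg hα0 (sub_nonneg.mpr hγ1.le)) hγx,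
          mul_nonneg (mul_nonneg hγ0 (sub_nonneg.mpr hα1)) hαy]

theorem baseNorm_sub_le_mul_tanhHalf_hilbertDist (hC : IsProperCone C)
    (he : e ∈ interior (dualConeSet C)) {x y : V} (hx : x ∈ C) (hy : y ∈ C) (hxy : x - y ∉ C)
    (hexy : ⟪e, y⟫ ≤ ⟪e, x⟫) :
    baseNorm C e (x - y) ≤ (⟪e, x⟫ + ⟪e, y⟫) * tanhHalf (hilbertDist C x y) := by
  have hy0 : y ≠ 0 := by rintro rfl; exact hxy (by simpa using hx)
  have hey := inner_pos_of_mem_interior_dualConeSet he hy hy0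
  have he' := interior_subset he
  by_cases htop : hilbertDist C x y = ⊤
  · rw [htop, tanhHalf_top, mul_one]
    exact baseNorm_sub_le he' hx hy
  obtain ⟨α, γ, hα, hγ, hdist⟩ :=
    exists_hilbertDist_eq_log hC.1 he' (hey.trans_le hexy) hey htop
  have hs : 0 < α * γ := mul_pos (by linarith [one_le_of_smul_sub_mem he' hey hexy hα])
    (by linarith [one_lt_of_smul_sub_mem hC hx hxy hγ])
  rw [hdist, tanhHalf_coe, Real.tanh_log_div_two hs]
  exact baseNorm_sub_le_of_smul_sub_mem hC he' hx hxy hey hexy hα hγ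

end

section

variable {C : Set V} {C' : Set V'} {e : V} {e' : V'} {T : V →ₗ[ℝ] V'}

theorem exists_mem_base_eq_inner_smul (hC : IsProperCone C) (he : e ∈ interior (dualConeSet C))
    {c : V} (hc : c ∈ C) (hc0 : c ≠ 0) : ∃ b ∈ C ∩ {v | ⟪e, v⟫ = 1}, c = ⟪e, c⟫ • b := by
  have hpos := inner_pos_of_mem_interior_dualConeSet he hc hc0
  refine ⟨⟪e, c⟫⁻¹ • c, ⟨hC.smul_mem (inv_nonneg.mpr hpos.le) hc, ?_⟩, ?_⟩
  · simp [real_inner_smul_right, hpos.ne']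
  · rw [smul_smul, mul_inv_cancel₀ hpos.ne', one_smul]

theorem mapsTo_of_mapsTo_base (hC : IsProperCone C) (hC' : IsProperCone C')
    (he : e ∈ interior (dualConeSet C))
    (hT : MapsTo T (C ∩ {v | ⟪e, v⟫ = 1}) (C' ∩ {v | ⟪e', v⟫ = 1})) : MapsTo T C C' := by
  intro c hc
  rcases eq_or_ne c 0 with rfl | hc0
  · simpa using hC'.zero_mem
  obtain ⟨b, hb, hcb⟩ := exists_mem_base_eq_inner_smul hC he hc hc0
  rw [hcb, map_smul]
  exact hC'.smul_mem (interior_subset he c hc) (hT hb).1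

theorem inner_map_of_mapsTo_base (hC : IsProperCone C) (he : e ∈ interior (dualConeSet C))
    (hT : MapsTo T (C ∩ {v | ⟪e, v⟫ = 1}) (C' ∩ {v | ⟪e', v⟫ = 1})) {c : V} (hc : c ∈ C) :
    ⟪e', T c⟫ = ⟪e, c⟫ := by
  rcases eq_or_ne c 0 with rfl | hc0
  · simp
  obtain ⟨b, hb, hcb⟩ := exists_mem_base_eq_inner_smul hC he hc hc0
  rw [hcb, map_smul, real_inner_smul_right, (hT hb).2, mul_one, real_inner_smul_right, hb.2,
    mul_one]

theorem hilbertDist_le_projDiam {a b : V} (ha : a ∈ C) (ha0 : a ≠ 0) (hb : b ∈ C) (hb0 : b ≠ 0) :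
    hilbertDist C' (T a) (T b) ≤ projDiam C C' T :=
  le_iSup₂_of_le a ⟨ha, ha0⟩ (le_iSup₂_of_le (f := fun b (_ : b ∈ C \ {0}) =>
    hilbertDist C' (T a) (T b)) b ⟨hb, hb0⟩ le_rfl)

end

theorem baseNorm_contraction_general
    {V : Type*} [NormedAddCommGroup V] [InnerProductSpace ℝ V]
    {V' : Type*} [NormedAddCommGroup V'] [InnerProductSpace ℝ V']
    (C : Set V) (C' : Set V') (hC : IsProperCone C) (hC' : IsProperCone C')
    (e : V) (he : e ∈ interior (dualConeSet C))
    (e' : V') (he' : e' ∈ interior (dualConeSet C'))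
    (B : Set V) (hB : B = C ∩ {v : V | (inner ℝ e v : ℝ) = 1})
    (B' : Set V') (hB' : B' = C' ∩ {v : V' | (inner ℝ e' v : ℝ) = 1})
    (T : V →ₗ[ℝ] V') (hT : ∀ b ∈ B, T b ∈ B')
    (v : V) (hv : 0 ≤ (inner ℝ e v : ℝ)) (hvC' : T v ∉ C') :
    baseNorm C' e' (T v) ≤ baseNorm C e v * tanhHalf (projDiam C C' T) := by
  subst hB hB'
  have hTC := mapsTo_of_mapsTo_base hC hC' he hT
  have hTe := fun c (hc : c ∈ C) => inner_map_of_mapsTo_base (e' := e') hC he hT hc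
  refine le_baseNorm_mul_of_forall_sub_eq hC (interior_subset he) fun cp hcp cm hcm hvdec => ?_
  subst hvdec
  have hcm0 : cm ≠ 0 := by rintro rfl; exact hvC' (by simpa using hTC hcp)
  have hcp0 : cp ≠ 0 := by
    rintro rfl
    have := inner_pos_of_mem_interior_dualConeSet he hcm hcm0
    rw [inner_sub_right, inner_zero_right] at hv
    linarith
  rw [inner_sub_right, sub_nonneg, ← hTe cp hcp, ← hTe cm hcm] at hv
  rw [map_sub] at hvC' ⊢
  rw [← hTe cp hcp, ← hTe cm hcm]
  calc baseNorm C' e' (T cp - T cm)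
      ≤ (⟪e', T cp⟫ + ⟪e', T cm⟫) * tanhHalf (hilbertDist C' (T cp) (T cm)) :=
        baseNorm_sub_le_mul_tanhHalf_hilbertDist hC' he' (hTC hcp) (hTC hcm) hvC' hv
    _ ≤ (⟪e', T cp⟫ + ⟪e', T cm⟫) * tanhHalf (projDiam C C' T) := by
        have he'C' := interior_subset he'
        gcongr
        · exact add_nonneg (he'C' _ (hTC hcp)) (he'C' _ (hTC hcm))
        · exact tanhHalf_le_tanhHalf (hilbertDist_ne_bot _ _)
            (hilbertDist_le_projDiam hcp hcp0 hcm hcm0)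

/-- **Base norm contraction (logarithmic negativity decrease).** -/
theorem baseNorm_contraction
    {V : Type*} [NormedAddCommGroup V] [InnerProductSpace ℝ V] [FiniteDimensional ℝ V]
    {V' : Type*} [NormedAddCommGroup V'] [InnerProductSpace ℝ V'] [FiniteDimensional ℝ V']
    (C : Set V) (C' : Set V') (hC : IsProperCone C) (hC' : IsProperCone C')
    (e : V) (he : e ∈ interior (dualConeSet C))
    (e' : V') (he' : e' ∈ interior (dualConeSet C'))
    (B : Set V) (hB : B = C ∩ {v : V | (inner ℝ e v : ℝ) = 1})
    (B' : Set V') (hB' : B' = C' ∩ {v : V' | (inner ℝ e' v : ℝ) = 1})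
    (T : V →ₗ[ℝ] V') (hT : ∀ b ∈ B, T b ∈ B')
    (v : V) (hv : 0 ≤ (inner ℝ e v : ℝ)) (hvC' : T v ∉ C') :
    baseNorm C' e' (T v) ≤ baseNorm C e v * tanhHalf (projDiam C C' T) :=
  baseNorm_contraction_general C C' hC hC' e he e' he' B hB B' hB' T hT v hv hvC'

end
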